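/- arXiv:2507.17736 — 2 statements merged into one kernel-verified Lean document; each statement's English description precedes it below -/
import Mathlib

section
/- (Lemma 1) In any SPIR scheme on a graph G satisfying the system model: for any subsets 𝒥, 𝒦 ⊆ [K], any server n ∈ [N], and any message indices k, k' ∈ [K], the conditional entropies of the answers agree: H(A_n^{[k]} | W_𝒥, R_𝒦, Q_n^{[k]}) = H(A_n^{[k']} | W_𝒥, R_𝒦, Q_n^{[k']}). -/
open Finset

noncomputable section

namespace SPIR

variable {Ω : Type} [Fintype Ω]

/-- Probability of an event under the probability mass function `μ`
on the finite sample space `Ω`. -/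
def pr (μ : Ω → ℝ) (E : Set Ω) : ℝ := ∑ ω, E.indicator μ ω

/-- Shannon entropy of the random variable `X`, measured in `q`-ary units. -/
def ent (q : ℕ) (μ : Ω → ℝ) {α : Type*} (X : Ω → α) : ℝ :=
  -∑ ω, μ ω * Real.logb q (pr μ {ω' | X ω' = X ω})

/-- Conditional Shannon entropy `H(X | Y)` in `q`-ary units. -/
def condEnt (q : ℕ) (μ : Ω → ℝ) {α β : Type*} (X : Ω → α) (Y : Ω → β) : ℝ :=
  ent q μ (fun ω => (X ω, Y ω)) - ent q μ Y

/-- Mutual information `I(X ; Y)` in `q`-ary units. -/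
def mutInf (q : ℕ) (μ : Ω → ℝ) {α β : Type*} (X : Ω → α) (Y : Ω → β) : ℝ :=
  ent q μ X + ent q μ Y - ent q μ (fun ω => (X ω, Y ω))

/-- Two random variables have the same (joint) distribution. -/
def IdentDist (μ : Ω → ℝ) {α : Type*} (X Y : Ω → α) : Prop :=
  ∀ s : Set α, pr μ (X ⁻¹' s) = pr μ (Y ⁻¹' s)

/-- Independence of two random variables. -/
def IndepRV (μ : Ω → ℝ) {α β : Type*} (X : Ω → α) (Y : Ω → β) : Prop :=
  ∀ (s : Set α) (t : Set β),
    pr μ (X ⁻¹' s ∩ Y ⁻¹' t) = pr μ (X ⁻¹' s) * pr μ (Y ⁻¹' t)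

/-- A symmetric private information retrieval (SPIR) scheme on a graph-replicated
database, following the system model:  `N` servers are the vertices of a simple graph
whose `K` edges are messages; message `W k` (uniform on `F^L`) and the message-specific
common randomness `R k` are stored exactly at the two endpoints `e1 k`, `e2 k` of
edge `k`.  All Shannon quantities are in `q`-ary units, `q = |F|`. -/
structure Scheme (q N K L : ℕ) (F : Type) [Field F] [Fintype F]
    (Ω : Type) [Fintype Ω] where
  /-- the underlying probability mass function -/
  μ : Ω → ℝ
  μ_nonneg : ∀ ω, 0 ≤ μ ω
  μ_sum : ∑ ω, μ ω = 1
  card_F : Fintype.card F = q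
  /-- first endpoint of each edge (message) -/
  e1 : Fin K → Fin N
  /-- second endpoint of each edge (message) -/
  e2 : Fin K → Fin N
  edge_ne : ∀ k, e1 k ≠ e2 k
  /-- the graph is simple: distinct edges have distinct endpoint sets -/
  edge_inj : ∀ k k', ({e1 k, e2 k} : Set (Fin N)) = {e1 k', e2 k'} → k = k'
  /-- alphabet of the queries -/
  QT : Type
  /-- alphabet of the answers -/
  AT : Type
  /-- alphabet of the common randomness -/
  RT : Type
  /-- alphabet of the user's query randomness -/
  UT : Type
  /-- the messages -/
  W : Fin K → Ω → Fin L → F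
  /-- the message-specific common randomness -/
  R : Fin K → Ω → RT
  /-- the user's query randomness `𝒬` -/
  U : Ω → UT
  /-- `Q n k` : query sent to server `n` when the desired message index is `k` -/
  Q : Fin N → Fin K → Ω → QT
  /-- `A n k` : answer of server `n` when the desired message index is `k` -/
  A : Fin N → Fin K → Ω → AT
  /-- the messages are jointly independent, each uniform on `F^L` -/
  W_unif : ∀ w : Fin K → Fin L → F,
    pr μ {ω | (fun k => W k ω) = w} = (1 / (q : ℝ) ^ L) ^ K
  /-- the common randomness variables are jointly independent of each other and of the
  messages -/
  R_indep : ∀ (s : Fin K → Set RT) (t : Set (Fin K → Fin L → F)),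
    pr μ {ω | (fun k => W k ω) ∈ t ∧ ∀ k, R k ω ∈ s k}
      = pr μ {ω | (fun k => W k ω) ∈ t} * ∏ k, pr μ {ω | R k ω ∈ s k}
  /-- the common randomness variables are identically distributed -/
  R_ident : ∀ k k', IdentDist μ (R k) (R k')
  /-- the user's query randomness is independent of `(𝒲, ℛ)` -/
  U_indep : IndepRV μ U (fun ω => (fun k => W k ω, fun k => R k ω))
  /-- the queries are a deterministic function of `𝒬` -/
  query_det : ∀ k, condEnt q μ (fun ω (n : Fin N) => Q n k ω) U = 0
  /-- the answer of a server is a deterministic function of its query, its stored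
  messages `𝒲ₙ` and its stored randomness `ℛₙ` -/
  answer_det : ∀ n k, condEnt q μ (A n k)
    (fun ω => (Q n k ω,
      fun j : {j : Fin K // e1 j = n ∨ e2 j = n} => W j ω,
      fun j : {j : Fin K // e1 j = n ∨ e2 j = n} => R j ω)) = 0
  /-- user privacy: `(Qₙ^[k], Aₙ^[k], 𝒲ₙ, ℛₙ)` has the same distribution for all `k` -/
  user_privacy : ∀ (n : Fin N) (k k' : Fin K), IdentDist μ
    (fun ω => (Q n k ω, A n k ω,
      fun j : {j : Fin K // e1 j = n ∨ e2 j = n} => W j ω,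
      fun j : {j : Fin K // e1 j = n ∨ e2 j = n} => R j ω))
    (fun ω => (Q n k' ω, A n k' ω,
      fun j : {j : Fin K // e1 j = n ∨ e2 j = n} => W j ω,
      fun j : {j : Fin K // e1 j = n ∨ e2 j = n} => R j ω))
  /-- reliability: the desired message is recovered from all answers and `𝒬` -/
  reliability : ∀ k, condEnt q μ (W k)
    (fun ω => (fun n : Fin N => A n k ω, U ω)) = 0
  /-- database privacy -/
  db_privacy : ∀ (k : Fin K) (J : Set (Fin K)), k ∉ J →
    mutInf q μ (fun ω => fun j : J => W j ω)
      (fun ω => (fun n : Fin N => A n k ω,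
        fun n : Fin N => Q n k ω,
        fun ℓ : {ℓ : Fin K // ℓ ∉ J} => R ℓ ω,
        fun ℓ : {ℓ : Fin K // ℓ ∉ J ∧ ℓ ≠ k} => W ℓ ω,
        U ω)) = 0
  /-- randomness recoverability at each server storing `R j` -/
  rand_recov : ∀ (k j : Fin K) (n : Fin N), (e1 j = n ∨ e2 j = n) →
    condEnt q μ (R j)
      (fun ω => (A n k ω,
        fun m : {m : Fin K // e1 m = n ∨ e2 m = n} => W m ω,
        fun m : {m : Fin K // (e1 m = n ∨ e2 m = n) ∧ m ≠ j} => R m ω,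
        Q n k ω)) = 0

/-- The simple graph underlying an SPIR scheme. -/
def schemeGraph {q N K L : ℕ} {F : Type} [Field F] [Fintype F]
    {Ω : Type} [Fintype Ω] (S : Scheme q N K L F Ω) : SimpleGraph (Fin N) :=
  SimpleGraph.fromRel (fun i j => ∃ k, S.e1 k = i ∧ S.e2 k = j)

/-! The view `(Qₙ^[k], Aₙ^[k], 𝒲ₙ, ℛₙ)` of server `n` is, on the support of the probability
measure, a function of `(𝒬, 𝒲ₙ, ℛₙ)`. Since `𝒬` is independent of `(𝒲, ℛ)`, the messages are
independent of the randomness, and each of the two families is mutually independent (the messages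
because they are jointly uniform), `(𝒬, 𝒲ₙ, ℛₙ)` is independent of the messages and randomness
stored away from `n`, and hence so is the view. The joint law of the view and these outside
variables is therefore the product of the marginals, which by user privacy does not depend on `k`.
The answer and the conditioning variables `W_𝒥, R_𝒦, Qₙ^[k]` are a fixed function of this pair,
so the conditional entropy does not depend on `k` either. -/

section Probability

variable {μ : Ω → ℝ}

lemma pr_univ (hsum : ∑ ω, μ ω = 1) : pr μ Set.univ = 1 := by
  simpa [pr] using hsum

lemma pr_mono (hμ : ∀ ω, 0 ≤ μ ω) {E E' : Set Ω} (h : E ⊆ E') : pr μ E ≤ pr μ E' :=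
  Finset.sum_le_sum fun ω _ => Set.indicator_le_indicator_of_subset h (fun ω => hμ ω) ω

lemma le_pr (hμ : ∀ ω, 0 ≤ μ ω) {E : Set Ω} {ω : Ω} (hω : ω ∈ E) : μ ω ≤ pr μ E := by
  calc μ ω = E.indicator μ ω := (Set.indicator_of_mem hω μ).symm
    _ ≤ pr μ E := Finset.single_le_sum (f := fun x => E.indicator μ x)
          (fun x _ => Set.indicator_nonneg (fun x _ => hμ x) x) (Finset.mem_univ ω)

lemma pr_congr_of_pos (hμ : ∀ ω, 0 ≤ μ ω) {E E' : Set Ω}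
    (h : ∀ ω, 0 < μ ω → (ω ∈ E ↔ ω ∈ E')) : pr μ E = pr μ E' := by
  classical
  refine Finset.sum_congr rfl fun ω _ => ?_
  rcases (hμ ω).eq_or_lt with h0 | h0
  · simp [Set.indicator_apply, ← h0]
  · simp [Set.indicator_apply, h ω h0]

lemma eq_zero_of_pr_eq (hμ : ∀ ω, 0 ≤ μ ω) {E E' : Set Ω} (hsub : E' ⊆ E)
    (h : pr μ E' = pr μ E) {ω : Ω} (hω : ω ∈ E) (hω' : ω ∉ E') : μ ω = 0 := by
  classical
  have hdiff : pr μ (E \ E') = pr μ E - pr μ E' := by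
    simp only [pr, Set.indicator_sdiff hsub, Pi.sub_apply, Finset.sum_sub_distrib]
  have hle : μ ω ≤ pr μ (E \ E') := le_pr hμ ⟨hω, hω'⟩
  linarith [hμ ω]

lemma sum_mul_comp_eq_sum_pr {α : Type*} (X : Ω → α) (g : α → ℝ) (T : Finset α)
    (hT : ∀ ω, X ω ∈ T) :
    ∑ ω, μ ω * g (X ω) = ∑ x ∈ T, pr μ {ω | X ω = x} * g x := by
  classical
  rw [← Finset.sum_fiberwise_of_maps_to (g := X) (fun ω _ => hT ω)]
  refine Finset.sum_congr rfl fun x _ => ?_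
  simp only [pr, Finset.sum_mul, Set.indicator_apply, Set.mem_ofPred_eq, ite_mul, zero_mul]
  rw [← Finset.sum_filter]
  exact Finset.sum_congr rfl fun ω hω => by rw [(Finset.mem_filter.mp hω).2]

open Classical in
lemma pr_preimage_eq_sum {α : Type*} (X : Ω → α) (s : Set α) (T : Finset α)
    (hT : ∀ ω, X ω ∈ T) :
    pr μ (X ⁻¹' s) = ∑ x ∈ T, if x ∈ s then pr μ {ω | X ω = x} else 0 := by
  have h := sum_mul_comp_eq_sum_pr (μ := μ) X (fun x => if x ∈ s then (1 : ℝ) else 0) T hT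
  simp only [mul_ite, mul_one, mul_zero] at h
  rw [← h]
  exact Finset.sum_congr rfl fun ω _ => by by_cases hω : X ω ∈ s <;> simp [hω]

lemma identDist_iff_pr_eq {α : Type*} {X Y : Ω → α} :
    IdentDist μ X Y ↔ ∀ x, pr μ {ω | X ω = x} = pr μ {ω | Y ω = x} := by
  classical
  refine ⟨fun h x => h {x}, fun h s => ?_⟩
  set T := Finset.univ.image X ∪ Finset.univ.image Y
  rw [pr_preimage_eq_sum X s T (fun ω => by simp [T]),
    pr_preimage_eq_sum Y s T (fun ω => by simp [T])]
  simp only [h]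

lemma IdentDist.comp {α β : Type*} {X Y : Ω → α} (h : IdentDist μ X Y) (f : α → β) :
    IdentDist μ (fun ω => f (X ω)) (fun ω => f (Y ω)) :=
  fun s => h (f ⁻¹' s)

lemma IdentDist.ent_eq {α : Type*} {X Y : Ω → α} (q : ℕ) (h : IdentDist μ X Y) :
    ent q μ X = ent q μ Y := by
  classical
  set T := Finset.univ.image X ∪ Finset.univ.image Y
  simp only [ent, identDist_iff_pr_eq.mp h,
    sum_mul_comp_eq_sum_pr X (fun x => Real.logb q (pr μ {ω' | Y ω' = x})) T
      (fun ω => by simp [T]),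
    sum_mul_comp_eq_sum_pr Y (fun x => Real.logb q (pr μ {ω' | Y ω' = x})) T
      (fun ω => by simp [T])]

lemma IdentDist.condEnt_eq {α β : Type*} {X X' : Ω → α} {Y Y' : Ω → β} (q : ℕ)
    (h : IdentDist μ (fun ω => (X ω, Y ω)) (fun ω => (X' ω, Y' ω))) :
    condEnt q μ X Y = condEnt q μ X' Y' := by
  rw [condEnt, condEnt, h.ent_eq, (h.comp Prod.snd).ent_eq]

end Probability

section Independence

variable {μ : Ω → ℝ} {α β γ δ : Type*}

lemma IndepRV.pr_eq {X : Ω → α} {Y : Ω → β} (h : IndepRV μ X Y) (x : α) (y : β) :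
    pr μ {ω | X ω = x ∧ Y ω = y} = pr μ {ω | X ω = x} * pr μ {ω | Y ω = y} :=
  h {x} {y}

lemma IndepRV.comp {X : Ω → α} {Y : Ω → β} (h : IndepRV μ X Y) (f : α → γ) (g : β → δ) :
    IndepRV μ (fun ω => f (X ω)) (fun ω => g (Y ω)) :=
  fun s t => h (f ⁻¹' s) (g ⁻¹' t)

lemma indepRV_of_pr_eq {X : Ω → α} {Y : Ω → β}
    (h : ∀ x y, pr μ {ω | X ω = x ∧ Y ω = y} = pr μ {ω | X ω = x} * pr μ {ω | Y ω = y}) :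
    IndepRV μ X Y := by
  classical
  intro s t
  set T1 := Finset.univ.image X
  set T2 := Finset.univ.image Y
  have hpre : X ⁻¹' s ∩ Y ⁻¹' t = (fun ω => (X ω, Y ω)) ⁻¹' (s ×ˢ t) := rfl
  rw [hpre, pr_preimage_eq_sum _ (s ×ˢ t) (T1 ×ˢ T2) (fun ω => by simp [T1, T2]),
    pr_preimage_eq_sum X s T1 (fun ω => by simp [T1]),
    pr_preimage_eq_sum Y t T2 (fun ω => by simp [T2]), Finset.sum_mul_sum, Finset.sum_product]
  refine Finset.sum_congr rfl fun x _ => Finset.sum_congr rfl fun y _ => ?_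
  by_cases hx : x ∈ s <;> by_cases hy : y ∈ t <;> simp [hx, hy, h x y]

lemma IndepRV.prodMk_prodMk {A₁ : Ω → α} {A₂ : Ω → β} {B₁ : Ω → γ} {B₂ : Ω → δ}
    (h : IndepRV μ (fun ω => (A₁ ω, A₂ ω)) (fun ω => (B₁ ω, B₂ ω)))
    (hA : IndepRV μ A₁ A₂) (hB : IndepRV μ B₁ B₂) :
    IndepRV μ (fun ω => (A₁ ω, B₁ ω)) (fun ω => (A₂ ω, B₂ ω)) := by
  refine indepRV_of_pr_eq fun ⟨a₁, b₁⟩ ⟨a₂, b₂⟩ => ?_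
  have hjoint : {ω | (A₁ ω, B₁ ω) = (a₁, b₁) ∧ (A₂ ω, B₂ ω) = (a₂, b₂)}
      = {ω | (A₁ ω, A₂ ω) = (a₁, a₂) ∧ (B₁ ω, B₂ ω) = (b₁, b₂)} := by
    ext ω; simp only [Set.mem_ofPred_eq, Prod.mk.injEq]; tauto
  have h₁ : pr μ {ω | (A₁ ω, B₁ ω) = (a₁, b₁)}
      = pr μ {ω | A₁ ω = a₁} * pr μ {ω | B₁ ω = b₁} := by
    simpa only [Prod.mk.injEq] using (h.comp Prod.fst Prod.fst).pr_eq a₁ b₁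
  have h₂ : pr μ {ω | (A₂ ω, B₂ ω) = (a₂, b₂)}
      = pr μ {ω | A₂ ω = a₂} * pr μ {ω | B₂ ω = b₂} := by
    simpa only [Prod.mk.injEq] using (h.comp Prod.snd Prod.snd).pr_eq a₂ b₂
  have hA' : pr μ {ω | (A₁ ω, A₂ ω) = (a₁, a₂)}
      = pr μ {ω | A₁ ω = a₁} * pr μ {ω | A₂ ω = a₂} := by
    simpa only [Prod.mk.injEq] using hA.pr_eq a₁ a₂
  have hB' : pr μ {ω | (B₁ ω, B₂ ω) = (b₁, b₂)}
      = pr μ {ω | B₁ ω = b₁} * pr μ {ω | B₂ ω = b₂} := by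
    simpa only [Prod.mk.injEq] using hB.pr_eq b₁ b₂
  rw [hjoint, h.pr_eq, hA', hB', h₁, h₂]
  ring

lemma IndepRV.prodMk_left {U : Ω → α} {Z₁ : Ω → β} {Z₂ : Ω → γ}
    (h : IndepRV μ U (fun ω => (Z₁ ω, Z₂ ω))) (hZ : IndepRV μ Z₁ Z₂) :
    IndepRV μ (fun ω => (U ω, Z₁ ω)) Z₂ := by
  refine indepRV_of_pr_eq fun ⟨u, z₁⟩ z₂ => ?_
  have hjoint : {ω | (U ω, Z₁ ω) = (u, z₁) ∧ Z₂ ω = z₂}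
      = {ω | U ω = u ∧ (Z₁ ω, Z₂ ω) = (z₁, z₂)} := by
    ext ω; simp only [Set.mem_ofPred_eq, Prod.mk.injEq]; tauto
  have h₁ : pr μ {ω | (U ω, Z₁ ω) = (u, z₁)} = pr μ {ω | U ω = u} * pr μ {ω | Z₁ ω = z₁} := by
    simpa only [Prod.mk.injEq] using (h.comp (fun u => u) Prod.fst).pr_eq u z₁
  have hZ' : pr μ {ω | (Z₁ ω, Z₂ ω) = (z₁, z₂)}
      = pr μ {ω | Z₁ ω = z₁} * pr μ {ω | Z₂ ω = z₂} := by
    simpa only [Prod.mk.injEq] using hZ.pr_eq z₁ z₂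
  rw [hjoint, h.pr_eq, hZ', h₁]
  ring

def DeterminedBy (μ : Ω → ℝ) (X : Ω → α) (V : Ω → β) : Prop :=
  ∀ ω ω', 0 < μ ω → 0 < μ ω' → V ω = V ω' → X ω = X ω'

lemma IndepRV.of_determinedBy (hμ : ∀ ω, 0 ≤ μ ω) {V : Ω → α} {Y : Ω → β} {X : Ω → γ}
    (h : IndepRV μ V Y) (hX : DeterminedBy μ X V) : IndepRV μ X Y := by
  intro s t
  set s' := V '' {ω | 0 < μ ω ∧ X ω ∈ s}
  have hmem : ∀ ω, 0 < μ ω → (ω ∈ X ⁻¹' s ↔ ω ∈ V ⁻¹' s') := fun ω hω =>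
    ⟨fun hs => ⟨ω, ⟨hω, hs⟩, rfl⟩,
      fun ⟨ω', ⟨hω', hs⟩, hV⟩ => by rwa [Set.mem_preimage, ← hX ω' ω hω' hω hV]⟩
  have hjoint : pr μ (X ⁻¹' s ∩ Y ⁻¹' t) = pr μ (V ⁻¹' s' ∩ Y ⁻¹' t) :=
    pr_congr_of_pos hμ fun ω hω => and_congr_left' (hmem ω hω)
  rw [hjoint, h, pr_congr_of_pos hμ hmem]

lemma determinedBy_of_condEnt_eq_zero {q : ℕ} (hq : 1 < (q : ℝ)) (hμ : ∀ ω, 0 ≤ μ ω)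
    {X : Ω → α} {Y : Ω → β} (h : condEnt q μ X Y = 0) : DeterminedBy μ X Y := by
  set pY : Ω → ℝ := fun ω => pr μ {ω' | Y ω' = Y ω}
  set pXY : Ω → ℝ := fun ω => pr μ {ω' | (X ω', Y ω') = (X ω, Y ω)}
  have hsub : ∀ ω, {ω' | (X ω', Y ω') = (X ω, Y ω)} ⊆ {ω' | Y ω' = Y ω} :=
    fun ω ω' hω' => congrArg Prod.snd hω'
  have hpos : ∀ ω, 0 < μ ω → 0 < pXY ω := fun ω hω => hω.trans_le (le_pr hμ rfl)
  -- `H(X | Y)` is a sum of nonnegative terms `μ ω · log (p(Y = y) / p(X = x, Y = y))`.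
  have hterm : ∀ ω ∈ Finset.univ, 0 ≤ μ ω * (Real.logb q (pY ω) - Real.logb q (pXY ω)) := by
    intro ω _
    rcases (hμ ω).eq_or_lt with h0 | h0
    · simp [← h0]
    · exact mul_nonneg h0.le (sub_nonneg.mpr
        (Real.logb_le_logb_of_le hq (hpos ω h0) (pr_mono hμ (hsub ω))))
  have hsum_zero : ∑ ω, μ ω * (Real.logb q (pY ω) - Real.logb q (pXY ω)) = 0 := by
    rw [← h]
    simp only [condEnt, ent, mul_sub, Finset.sum_sub_distrib, pY, pXY]
    ring
  have hfiber : ∀ ω, 0 < μ ω → pXY ω = pY ω := by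
    intro ω hω
    have h0 := (Finset.sum_eq_zero_iff_of_nonneg hterm).mp hsum_zero ω (Finset.mem_univ ω)
    have hlog : Real.logb q (pY ω) = Real.logb q (pXY ω) := by
      rcases mul_eq_zero.mp h0 with h0 | h0
      · exact absurd h0 hω.ne'
      · linarith
    exact (Real.logb_injOn_pos hq (hpos ω hω)
      ((hpos ω hω).trans_le (pr_mono hμ (hsub ω))) hlog.symm)
  intro ω ω' hω hω' hY
  by_contra hX
  exact hω'.ne' (eq_zero_of_pr_eq hμ (hsub ω) (hfiber ω hω) hY.symm
    fun h => hX (congrArg Prod.fst h).symm)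

lemma IdentDist.prodMk_of_indepRV {X₁ X₂ : Ω → α} {Y : Ω → β} (h : IdentDist μ X₁ X₂)
    (h₁ : IndepRV μ X₁ Y) (h₂ : IndepRV μ X₂ Y) :
    IdentDist μ (fun ω => (X₁ ω, Y ω)) (fun ω => (X₂ ω, Y ω)) := by
  refine identDist_iff_pr_eq.mpr fun ⟨x, y⟩ => ?_
  simp only [Prod.mk.injEq]
  rw [h₁.pr_eq, h₂.pr_eq, identDist_iff_pr_eq.mp h x]

def IIndepRV {ι : Type*} [Fintype ι] (μ : Ω → ℝ) (X : ι → Ω → α) : Prop :=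
  ∀ s : ι → Set α, pr μ {ω | ∀ i, X i ω ∈ s i} = ∏ i, pr μ {ω | X i ω ∈ s i}

lemma IIndepRV.indepRV_restrict {ι : Type*} [Fintype ι] {X : ι → Ω → α}
    (h : IIndepRV μ X) (hsum : ∑ ω, μ ω = 1) (P : ι → Prop) :
    IndepRV μ (fun ω (i : {i // P i}) => X i ω) (fun ω (i : {i // ¬ P i}) => X i ω) := by
  classical
  refine indepRV_of_pr_eq fun a b => ?_
  set s₁ : ι → Set α := fun i => if h : P i then {a ⟨i, h⟩} else Set.univ
  set s₂ : ι → Set α := fun i => if h : P i then Set.univ else {b ⟨i, h⟩}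
  have h₁ : {ω | (fun i : {i // P i} => X i ω) = a} = {ω | ∀ i, X i ω ∈ s₁ i} := by
    ext ω
    simp only [Set.mem_ofPred_eq, funext_iff, Subtype.forall]
    exact forall_congr' fun i => by by_cases hi : P i <;> simp [s₁, hi]
  have h₂ : {ω | (fun i : {i // ¬ P i} => X i ω) = b} = {ω | ∀ i, X i ω ∈ s₂ i} := by
    ext ω
    simp only [Set.mem_ofPred_eq, funext_iff, Subtype.forall]
    exact forall_congr' fun i => by by_cases hi : P i <;> simp [s₂, hi]
  have hfactor : ∀ i, pr μ {ω | X i ω ∈ s₁ i ∩ s₂ i}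
      = pr μ {ω | X i ω ∈ s₁ i} * pr μ {ω | X i ω ∈ s₂ i} := fun i => by
    by_cases hi : P i <;> simp [s₁, s₂, hi, pr_univ hsum]
  have hjoint : {ω | (fun i : {i // P i} => X i ω) = a ∧ (fun i : {i // ¬ P i} => X i ω) = b}
      = {ω | ∀ i, X i ω ∈ s₁ i ∩ s₂ i} := by
    rw [Set.ofPred_and, h₁, h₂]
    ext ω
    simp only [Set.mem_inter_iff, Set.mem_ofPred_eq, forall_and]
  rw [hjoint, h₁, h₂, h, h, h, Finset.prod_congr rfl fun i _ => hfactor i,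
    Finset.prod_mul_distrib]

end Independence

section Uniform

variable {μ : Ω → ℝ} {ι γ : Type*} [Fintype ι] [Fintype γ]

open Classical in
lemma pr_forall_mem_of_uniform {X : ι → Ω → γ}
    (hu : ∀ w : ι → γ, pr μ {ω | (fun i => X i ω) = w} = (1 / Fintype.card γ) ^ Fintype.card ι)
    (s : ι → Set γ) :
    pr μ {ω | ∀ i, X i ω ∈ s i} = ∏ i, ((s i).toFinset.card / Fintype.card γ : ℝ) := by
  have hpre : {ω | ∀ i, X i ω ∈ s i} = (fun ω i => X i ω) ⁻¹' {w | ∀ i, w i ∈ s i} := rfl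
  rw [hpre, pr_preimage_eq_sum _ _ Finset.univ (fun _ => Finset.mem_univ _)]
  simp only [hu, Set.mem_ofPred_eq]
  rw [← Finset.sum_filter, Finset.sum_const, nsmul_eq_mul]
  have hbox : Finset.univ.filter (fun w : ι → γ => ∀ i, w i ∈ s i)
      = Fintype.piFinset fun i => (s i).toFinset := by
    ext w; simp
  rw [hbox, Fintype.card_piFinset, Nat.cast_prod, ← Finset.card_univ (α := ι),
    ← Finset.prod_const, ← Finset.prod_mul_distrib]
  simp only [div_eq_mul_inv, one_mul]

lemma iIndepRV_of_uniform [Nonempty γ] {X : ι → Ω → γ}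
    (hu : ∀ w : ι → γ, pr μ {ω | (fun i => X i ω) = w} = (1 / Fintype.card γ) ^ Fintype.card ι) :
    IIndepRV μ X := by
  classical
  intro s
  have hcoord : ∀ i, pr μ {ω | X i ω ∈ s i} = (s i).toFinset.card / Fintype.card γ := by
    intro i
    have hset : {ω | X i ω ∈ s i}
        = {ω | ∀ j, X j ω ∈ (if j = i then s i else Set.univ)} := by
      ext ω
      refine ⟨fun h j => ?_, fun h => by simpa using h i⟩
      by_cases hj : j = i
      · subst hj; simpa using h
      · simp [hj]
    have hγ : (Fintype.card γ : ℝ) ≠ 0 := Nat.cast_ne_zero.mpr Fintype.card_ne_zero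
    rw [hset, pr_forall_mem_of_uniform hu, Finset.prod_eq_single i]
    · simp
    · intro j _ hj
      simp [hj, Finset.card_univ, hγ]
    · simp
  rw [pr_forall_mem_of_uniform hu]
  exact Finset.prod_congr rfl fun i _ => (hcoord i).symm

end Uniform

namespace Scheme

variable {q N K L : ℕ} {F : Type} [Field F] [Fintype F] (S : Scheme q N K L F Ω)

lemma one_lt_q (S : Scheme q N K L F Ω) : 1 < (q : ℝ) := by
  rw [← S.card_F]
  exact_mod_cast Fintype.one_lt_card

lemma iIndepRV_W : IIndepRV S.μ S.W := by
  refine iIndepRV_of_uniform fun w => ?_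
  rw [S.W_unif, Fintype.card_fun, Fintype.card_fin, Fintype.card_fin, S.card_F]
  push_cast
  rfl

lemma iIndepRV_R : IIndepRV S.μ S.R := by
  intro s
  simpa [pr_univ S.μ_sum] using S.R_indep s Set.univ

lemma indepRV_W_R : IndepRV S.μ (fun ω k => S.W k ω) (fun ω k => S.R k ω) := by
  refine indepRV_of_pr_eq fun w r => ?_
  have hR : {ω | (fun k => S.R k ω) = r} = {ω | ∀ k, S.R k ω ∈ ({r k} : Set S.RT)} := by
    ext ω; simp [funext_iff]
  have hWR : {ω | (fun k => S.W k ω) = w ∧ (fun k => S.R k ω) = r}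
      = {ω | (fun k => S.W k ω) ∈ ({w} : Set _) ∧ ∀ k, S.R k ω ∈ ({r k} : Set S.RT)} := by
    ext ω; simp [funext_iff]
  rw [hR, hWR, S.iIndepRV_R, S.R_indep]
  rfl

lemma indepRV_inside_outside (P : Fin K → Prop) :
    IndepRV S.μ
      (fun ω => (S.U ω, fun j : {j // P j} => S.W j ω, fun j : {j // P j} => S.R j ω))
      (fun ω => (fun j : {j // ¬ P j} => S.W j ω, fun j : {j // ¬ P j} => S.R j ω)) := by
  classical
  have hWR := (S.indepRV_W_R.comp (Equiv.piEquivPiSubtypeProd P _)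
    (Equiv.piEquivPiSubtypeProd P _)).prodMk_prodMk
    (S.iIndepRV_W.indepRV_restrict S.μ_sum P) (S.iIndepRV_R.indepRV_restrict S.μ_sum P)
  exact (S.U_indep.comp (fun u => u) fun wr =>
    ((fun j : {j // P j} => wr.1 j, fun j : {j // P j} => wr.2 j),
      (fun j : {j // ¬ P j} => wr.1 j, fun j : {j // ¬ P j} => wr.2 j))).prodMk_left hWR

def serverView (n : Fin N) (k : Fin K) :
    Ω → S.QT × S.AT × ({j // S.e1 j = n ∨ S.e2 j = n} → Fin L → F)
      × ({j // S.e1 j = n ∨ S.e2 j = n} → S.RT) :=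
  fun ω => (S.Q n k ω, S.A n k ω, fun j => S.W j ω, fun j => S.R j ω)

lemma serverView_determinedBy (n : Fin N) (k : Fin K) :
    DeterminedBy S.μ (S.serverView n k) (fun ω => (S.U ω,
      fun j : {j // S.e1 j = n ∨ S.e2 j = n} => S.W j ω,
      fun j : {j // S.e1 j = n ∨ S.e2 j = n} => S.R j ω)) := by
  intro ω ω' hω hω' hV
  simp only [Prod.mk.injEq] at hV
  obtain ⟨hU, hW, hR⟩ := hV
  have hQ : S.Q n k ω = S.Q n k ω' := congrFun
    (determinedBy_of_condEnt_eq_zero S.one_lt_q S.μ_nonneg (S.query_det k) ω ω' hω hω' hU) n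
  have hA : S.A n k ω = S.A n k ω' :=
    determinedBy_of_condEnt_eq_zero S.one_lt_q S.μ_nonneg (S.answer_det n k) ω ω' hω hω'
      (by simp only [hQ, hW, hR])
  simp only [serverView, hQ, hA, hW, hR]

lemma indepRV_serverView (n : Fin N) (k : Fin K) :
    IndepRV S.μ (S.serverView n k) (fun ω =>
      (fun j : {j // ¬ (S.e1 j = n ∨ S.e2 j = n)} => S.W j ω,
        fun j : {j // ¬ (S.e1 j = n ∨ S.e2 j = n)} => S.R j ω)) :=
  (S.indepRV_inside_outside _).of_determinedBy S.μ_nonneg (S.serverView_determinedBy n k)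

lemma identDist_answer_cond (J Kc : Set (Fin K)) (n : Fin N) (k k' : Fin K) :
    IdentDist S.μ
      (fun ω => (S.A n k ω, (fun j : J => S.W j ω, fun m : Kc => S.R m ω, S.Q n k ω)))
      (fun ω => (S.A n k' ω, (fun j : J => S.W j ω, fun m : Kc => S.R m ω, S.Q n k' ω))) := by
  classical
  set P : Fin K → Prop := fun j => S.e1 j = n ∨ S.e2 j = n
  let reassemble : (S.QT × S.AT × ({j // P j} → Fin L → F) × ({j // P j} → S.RT))
      × (({j // ¬ P j} → Fin L → F) × ({j // ¬ P j} → S.RT))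
      → S.AT × (J → Fin L → F) × (Kc → S.RT) × S.QT :=
    fun ⟨⟨Q, A, w, r⟩, w', r'⟩ => (A,
      fun j => (Equiv.piEquivPiSubtypeProd P fun _ => Fin L → F).symm (w, w') j,
      fun m => (Equiv.piEquivPiSubtypeProd P fun _ => S.RT).symm (r, r') m, Q)
  have hreassemble : ∀ k, (fun ω => reassemble (S.serverView n k ω,
      (fun j : {j // ¬ P j} => S.W j ω, fun j : {j // ¬ P j} => S.R j ω)))
      = fun ω => (S.A n k ω, (fun j : J => S.W j ω, fun m : Kc => S.R m ω, S.Q n k ω)) := by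
    intro k
    funext ω
    have hW := (Equiv.piEquivPiSubtypeProd P fun _ => Fin L → F).symm_apply_apply
      fun j => S.W j ω
    have hR := (Equiv.piEquivPiSubtypeProd P fun _ => S.RT).symm_apply_apply fun j => S.R j ω
    exact Prod.ext rfl (Prod.ext (funext fun j => congrFun hW j)
      (Prod.ext (funext fun m => congrFun hR m) rfl))
  rw [← hreassemble k, ← hreassemble k']
  exact ((S.user_privacy n k k').prodMk_of_indepRV (S.indepRV_serverView n k)
    (S.indepRV_serverView n k')).comp reassemble

end Scheme

theorem answers_independent_of_index_general
    {q N K L : ℕ} {F : Type} [Field F] [Fintype F] {Ω : Type} [Fintype Ω]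
    (S : Scheme q N K L F Ω) :
    ∀ (J Kc : Set (Fin K)) (n : Fin N) (k k' : Fin K),
      condEnt q S.μ (S.A n k)
        (fun ω => (fun j : J => S.W j ω, fun m : Kc => S.R m ω, S.Q n k ω))
      = condEnt q S.μ (S.A n k')
        (fun ω => (fun j : J => S.W j ω, fun m : Kc => S.R m ω, S.Q n k' ω)) :=
  fun J Kc n k k' => (S.identDist_answer_cond J Kc n k k').condEnt_eq q

/-- **Lemma 1.** For any subsets `𝒥, 𝒦 ⊆ [K]`, any server `n` and any message indices
`k, k'`, the conditional entropies of the answers agree: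
`H(Aₙ^[k] | W_𝒥, R_𝒦, Qₙ^[k]) = H(Aₙ^[k'] | W_𝒥, R_𝒦, Qₙ^[k'])`. -/
theorem answers_independent_of_index
    {q N K L : ℕ} {F : Type} [Field F] [Fintype F] {Ω : Type} [Fintype Ω]
    (hN : 3 ≤ N) (hK : 2 ≤ K) (hL : 1 ≤ L)
    (S : Scheme q N K L F Ω) :
    ∀ (J Kc : Set (Fin K)) (n : Fin N) (k k' : Fin K),
      condEnt q S.μ (S.A n k)
        (fun ω => (fun j : J => S.W j ω, fun m : Kc => S.R m ω, S.Q n k ω))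
      = condEnt q S.μ (S.A n k')
        (fun ω => (fun j : J => S.W j ω, fun m : Kc => S.R m ω, S.Q n k' ω)) :=
  answers_independent_of_index_general S

end SPIR
end
end

section
/- (User privacy of the achievable scheme) Let q be a prime power, G a simple graph with vertex set [N] and edge set indexed by [K], and Ī a signed incidence matrix of G. Let W (the messages) and R (the randomness) be random variables, and let h = (h_1,…,h_K) be uniform on 𝔽_q^K and independent of (W, R). Fix a server n of degree δ and list the edges incident to n as ℓ_1 < … < ℓ_δ. For a desired edge index k ∈ [K], define the query Q_n^{[k]} ∈ 𝔽_q^δ by Q_n^{[k]} = (Ī(n,ℓ_1)·h_{ℓ_1}, …, Ī(n,ℓ_δ)·h_{ℓ_δ}) + [k is incident to n and n is the designated endpoint j of edge k]·e_m, where e_m is the standard unit vector selecting the position of edge k among ℓ_1,…,ℓ_δ. Then for every k, the query Q_n^{[k]} is uniformly distributed on 𝔽_q^δ and independent of (W, R); in particular the joint distribution of (Q_n^{[k]}, 𝒲_n, ℛ_n) is the same for every desired index k, where 𝒲_n and ℛ_n are the messages and randomness stored at server n. -/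
/-!
Away from the designated-endpoint shift, the query is `h` restricted to the edges at `n` and
scaled by the nonzero signs `Ī(n, ℓ)`. This is a surjective additive map `𝔽_q^K → 𝔽_q^δ`, so all
its fibers have `q^(K-δ)` points, and the shift, which depends on `k` but not on `ω`, only
translates the fibers. Hence the uniform `h`, independent of `(W, R)`, is pushed forward to a
uniform query independent of `(W, R)`, for every `k`.
-/

open Finset

noncomputable section

namespace SPIR

variable {Ω : Type} [Fintype Ω]

lemma pr_empty (μ : Ω → ℝ) : pr μ (∅ : Set Ω) = 0 := by simp [pr]

lemma pr_eq_sum_pr_fiber {α : Type*} [Fintype α] (μ : Ω → ℝ) (X : Ω → α) (E : Set Ω) :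
    pr μ E = ∑ a, pr μ {ω | X ω = a ∧ ω ∈ E} := by
  classical
  simp only [pr]
  rw [Finset.sum_comm]
  refine Finset.sum_congr rfl fun ω _ => ?_
  rw [Finset.sum_eq_single (X ω)]
  · by_cases hω : ω ∈ E <;> simp [Set.indicator, hω]
  · intro a _ ha
    exact Set.indicator_of_notMem (fun hω => ha hω.1.symm) _
  · simp

lemma pr_comp_eq_sum_pr_fiber {α γ : Type*} [Fintype α] [DecidableEq γ] (μ : Ω → ℝ)
    (X : Ω → α) (f : α → γ) (c : γ) (P : Ω → Prop) :
    pr μ {ω | f (X ω) = c ∧ P ω} = ∑ a with f a = c, pr μ {ω | X ω = a ∧ P ω} := by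
  rw [pr_eq_sum_pr_fiber μ X, Finset.sum_filter]
  refine Finset.sum_congr rfl fun a _ => ?_
  split_ifs with ha
  · exact congrArg (pr μ) <| Set.ext fun ω => and_congr_right fun hX => by
      simp [hX, ha]
  · rw [← pr_empty μ]
    exact congrArg (pr μ) <| Set.eq_empty_of_forall_notMem fun ω ⟨hX, hf, _⟩ =>
      ha (hX ▸ hf)

section UniformIndep

variable {α β γ : Type*}

def UniformIndep (μ : Ω → ℝ) (p : ℝ) (X : Ω → α) (Y : Ω → β) : Prop :=
  ∀ (a : α) (s : Set β), pr μ {ω | X ω = a ∧ Y ω ∈ s} = p * pr μ {ω | Y ω ∈ s}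

variable {μ : Ω → ℝ} {p : ℝ} {X : Ω → α} {Y : Ω → β}

lemma UniformIndep.pr_comp [Fintype α] [DecidableEq γ] (hX : UniformIndep μ p X Y)
    (f : α → γ) (c : γ) (s : Set β) :
    pr μ {ω | f (X ω) = c ∧ Y ω ∈ s} = #{a | f a = c} * p * pr μ {ω | Y ω ∈ s} := by
  rw [pr_comp_eq_sum_pr_fiber μ X f c (fun ω => Y ω ∈ s),
    Finset.sum_congr rfl fun a _ => hX a s, Finset.sum_const, nsmul_eq_mul, mul_assoc]

lemma UniformIndep.identDist_prod [Fintype α] {X' : Ω → α} (hX : UniformIndep μ p X Y)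
    (hX' : UniformIndep μ p X' Y) :
    IdentDist μ (fun ω => (X ω, Y ω)) (fun ω => (X' ω, Y ω)) := by
  have key : ∀ Z : Ω → α, UniformIndep μ p Z Y → ∀ s : Set (α × β),
      pr μ ((fun ω => (Z ω, Y ω)) ⁻¹' s) = ∑ a, p * pr μ {ω | Y ω ∈ {b | (a, b) ∈ s}} := by
    intro Z hZ s
    rw [pr_eq_sum_pr_fiber μ Z]
    refine Finset.sum_congr rfl fun a _ => ?_
    rw [← hZ a]
    exact congrArg (pr μ) <| Set.ext fun ω => and_congr_right fun hZω => by
      simp [hZω]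
  intro s
  rw [key X hX, key X' hX']

end UniformIndep

lemma _root_.AddMonoidHom.card_fiber_mul_card_eq {A B : Type*} [AddGroup A] [Fintype A]
    [AddMonoid B] [Fintype B] [DecidableEq B] (f : A →+ B) (hf : Function.Surjective f)
    (b : B) : #{a | f a = b} * Fintype.card B = Fintype.card A := by
  have hfiber : ∀ b', #{a | f a = b'} = #{a | f a = b} := fun b' =>
    AddMonoidHom.card_fiber_eq_of_mem_range f (hf b') (hf b)
  calc #{a | f a = b} * Fintype.card B = ∑ b' : B, #{a | f a = b'} := by
        simp only [hfiber, Finset.sum_const, Finset.card_univ, smul_eq_mul, mul_comm]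
    _ = Fintype.card A :=
        (Finset.card_eq_sum_card_fiberwise fun _ _ => Finset.mem_coe.2 (Finset.mem_univ _)).symm

def weightedRestrict {ι κ R : Type*} [Semiring R] (a : ι → R) (ℓ : ι → κ) :
    (κ → R) →+ (ι → R) where
  toFun u i := a i * u (ℓ i)
  map_zero' := by ext; simp
  map_add' u v := by ext; simp [mul_add]

lemma weightedRestrict_surjective {ι κ R : Type*} [DivisionRing R] {a : ι → R}
    (ha : ∀ i, a i ≠ 0) {ℓ : ι → κ} (hℓ : Function.Injective ℓ) :
    Function.Surjective (weightedRestrict a ℓ) := by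
  intro v
  refine ⟨Function.extend ℓ (fun i => (a i)⁻¹ * v i) 0, funext fun i => ?_⟩
  simp [weightedRestrict, hℓ.extend_apply, ← mul_assoc, mul_inv_cancel₀ (ha i)]

lemma UniformIndep.weightedRestrict_add {ι κ F β : Type*} [Fintype ι] [Fintype κ]
    [Field F] [Fintype F] {μ : Ω → ℝ} {h : Ω → κ → F}
    {Y : Ω → β} (hh : UniformIndep μ ((1 / (Fintype.card F : ℝ)) ^ Fintype.card κ) h Y)
    {a : ι → F} (ha : ∀ i, a i ≠ 0) {ℓ : ι → κ} (hℓ : Function.Injective ℓ) (c : ι → F) :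
    UniformIndep μ ((1 / (Fintype.card F : ℝ)) ^ Fintype.card ι)
      (fun ω i => a i * h ω (ℓ i) + c i) Y := by
  classical
  intro v s
  have hcard := (weightedRestrict a ℓ).card_fiber_mul_card_eq
    (weightedRestrict_surjective ha hℓ) (v - c)
  have hfiber : #{u : κ → F | (fun i => a i * u (ℓ i) + c i) = v}
      = #{u | weightedRestrict a ℓ u = v - c} := by
    simp only [eq_sub_iff_add_eq]
    rfl
  rw [hh.pr_comp (fun u i => a i * u (ℓ i) + c i) v s, hfiber]
  congr 1
  have hq : (Fintype.card F : ℝ) ≠ 0 := Nat.cast_ne_zero.2 Fintype.card_ne_zero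
  rw [Fintype.card_fun, Fintype.card_fun] at hcard
  have hcardR : (#{u | weightedRestrict a ℓ u = v - c} : ℝ) * (Fintype.card F : ℝ) ^
      Fintype.card ι = (Fintype.card F : ℝ) ^ Fintype.card κ := by
    exact_mod_cast hcard
  have hN : (#{u | weightedRestrict a ℓ u = v - c} : ℝ) ≠ 0 :=
    left_ne_zero_of_mul (hcardR ▸ pow_ne_zero _ hq)
  rw [one_div, inv_pow, inv_pow, ← hcardR]
  field_simp

theorem scheme_user_privacy_general
    {q N K : ℕ} (F : Type) [Field F] [Fintype F] (hqF : Fintype.card F = q)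
    (I : Fin N → Fin K → F)
    (jdes : Fin K → Fin N)
    (n : Fin N) (δ : ℕ) (ℓe : Fin δ → Fin K) (hmono : StrictMono ℓe)
    (hinc : ∀ i : Fin δ, I n (ℓe i) ≠ 0)
    {Ω : Type} [Fintype Ω] (μ : Ω → ℝ)
    {WT RT : Type} (W : Ω → WT) (R : Ω → RT) (h : Ω → Fin K → F)
    (hh : ∀ (v : Fin K → F) (s : Set (WT × RT)),
      pr μ {ω | h ω = v ∧ (W ω, R ω) ∈ s}
        = (1 / (q : ℝ)) ^ K * pr μ {ω | (W ω, R ω) ∈ s}) :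
    ∀ k : Fin K,
      (∀ (v : Fin δ → F) (s : Set (WT × RT)),
        pr μ {ω | (fun i : Fin δ =>
              I n (ℓe i) * h ω (ℓe i) +
                if ℓe i = k ∧ jdes k = n then 1 else 0) = v ∧ (W ω, R ω) ∈ s}
          = (1 / (q : ℝ)) ^ δ * pr μ {ω | (W ω, R ω) ∈ s}) ∧
      ∀ k' : Fin K, IdentDist μ
        (fun ω => ((fun i : Fin δ =>
            I n (ℓe i) * h ω (ℓe i) +
              if ℓe i = k ∧ jdes k = n then 1 else 0), W ω, R ω))
        (fun ω => ((fun i : Fin δ =>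
            I n (ℓe i) * h ω (ℓe i) +
              if ℓe i = k' ∧ jdes k' = n then 1 else 0), W ω, R ω)) := by
  subst hqF
  have hU : UniformIndep μ ((1 / (Fintype.card F : ℝ)) ^ Fintype.card (Fin K)) h
      (fun ω => (W ω, R ω)) := by
    rw [Fintype.card_fin]
    exact hh
  have hQ : ∀ k : Fin K, UniformIndep μ ((1 / (Fintype.card F : ℝ)) ^ δ)
      (fun ω i => I n (ℓe i) * h ω (ℓe i) + if ℓe i = k ∧ jdes k = n then 1 else 0)
      (fun ω => (W ω, R ω)) := fun k => by
    simpa only [Fintype.card_fin] using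
      hU.weightedRestrict_add hinc hmono.injective fun i => if ℓe i = k ∧ jdes k = n then 1 else 0
  exact fun k => ⟨hQ k, fun k' => (hQ k).identDist_prod (hQ k')⟩

/-- **User privacy of the achievable scheme.** Let `Ī` be a signed incidence matrix of
a simple graph on vertices `Fin N` with edges `Fin K`, let `h` be uniform on `𝔽_q^K`
and independent of the stored data `(W, R)`, fix a server `n` of degree `δ`, list its
incident edges as `ℓe 0 < … < ℓe (δ-1)`, and let `jdes m` be the designated endpoint of
edge `m`.  Then for every desired index `k` the query
`Q_n^[k] = (Ī n (ℓe i) · h (ℓe i))_i + [k incident to n and jdes k = n] · e_m`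
is uniform on `𝔽_q^δ` and independent of `(W, R)`; in particular the joint
distribution of `(Q_n^[k], W, R)` — hence of `(Q_n^[k], 𝒲_n, ℛ_n)` — is the same for
every `k`. -/
theorem scheme_user_privacy
    {q N K : ℕ} (F : Type) [Field F] [Fintype F] (hqF : Fintype.card F = q)
    (I : Fin N → Fin K → F)
    (hI : ∀ ℓ : Fin K, ∃ a b : Fin N, a ≠ b ∧ I a ℓ = 1 ∧ I b ℓ = -1 ∧
      ∀ m : Fin N, m ≠ a → m ≠ b → I m ℓ = 0)
    (jdes : Fin K → Fin N) (hjdes : ∀ m : Fin K, I (jdes m) m ≠ 0)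
    (n : Fin N) (δ : ℕ) (ℓe : Fin δ → Fin K) (hmono : StrictMono ℓe)
    (hinc : ∀ i : Fin δ, I n (ℓe i) ≠ 0)
    (hallinc : ∀ m : Fin K, I n m ≠ 0 → ∃ i : Fin δ, ℓe i = m)
    {Ω : Type} [Fintype Ω] (μ : Ω → ℝ)
    (hμ0 : ∀ ω, 0 ≤ μ ω) (hμ1 : ∑ ω, μ ω = 1)
    {WT RT : Type} (W : Ω → WT) (R : Ω → RT) (h : Ω → Fin K → F)
    (hh : ∀ (v : Fin K → F) (s : Set (WT × RT)),
      pr μ {ω | h ω = v ∧ (W ω, R ω) ∈ s}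
        = (1 / (q : ℝ)) ^ K * pr μ {ω | (W ω, R ω) ∈ s}) :
    ∀ k : Fin K,
      (∀ (v : Fin δ → F) (s : Set (WT × RT)),
        pr μ {ω | (fun i : Fin δ =>
              I n (ℓe i) * h ω (ℓe i) +
                if ℓe i = k ∧ jdes k = n then 1 else 0) = v ∧ (W ω, R ω) ∈ s}
          = (1 / (q : ℝ)) ^ δ * pr μ {ω | (W ω, R ω) ∈ s}) ∧
      ∀ k' : Fin K, IdentDist μ
        (fun ω => ((fun i : Fin δ =>
            I n (ℓe i) * h ω (ℓe i) +
              if ℓe i = k ∧ jdes k = n then 1 else 0), W ω, R ω))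
        (fun ω => ((fun i : Fin δ =>
            I n (ℓe i) * h ω (ℓe i) +
              if ℓe i = k' ∧ jdes k' = n then 1 else 0), W ω, R ω)) :=
  scheme_user_privacy_general F hqF I jdes n δ ℓe hmono hinc μ W R h hh

end SPIR
end
end
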